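/- Let ζ₁,...,ζ_N be complex numbers and define P_N(z) = ∏_{n=N}^{1} [[1, ζ_n z^{-n}], [-ζ̄_n z^n, 1]] (higher index on the left). Then the (2,1) entry of P_N is a Laurent polynomial in z whose coefficient of z^m, for m ≥ 1, equals the sum over all multi-indices 0 < i₁ < j₁ < i₂ < ... < j_r < i_{r+1} ≤ N with ∑ i_* − ∑ j_* = m of the products (−ζ̄_{i₁})ζ_{j₁}···(−ζ̄_{i_r})ζ_{j_r}(−ζ̄_{i_{r+1}}), and the coefficient of z^m vanishes for m ≤ 0. -/

import Mathlib

/-!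
Since `P_{N+1} = M_{N+1} P_N`, the first column of `P_N` obeys a two-term recursion. Both of its
entries are sums of monomials indexed by subsets `T ⊆ {1, …, N}` (even `|T|` for the `(1,1)`
entry, odd `|T|` for the `(2,1)` entry): adding the new top index `N + 1` to `T` appends an `i`,
with factor `-ζ̄_{N+1} z^{N+1}`, when `|T|` is even, and a `j`, with factor `ζ_{N+1} z^{-(N+1)}`,
when `|T|` is odd. The coefficients vanish for `m ≤ 0` because for `i₁ < j₁ < ⋯ < j_r < i_{r+1}`
the alternating sum `i₁ + (i₂ - j₁) + ⋯ + (i_{r+1} - j_r)` is at least `i₁ ≥ 1`.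
-/

open scoped Matrix

/-- The elementary factor `[[1, ζ_n z^{-n}], [-ζ̄_n z^n, 1]]` over Laurent series. -/
noncomputable def rsM (ζ : ℕ → ℂ) (n : ℕ) : Matrix (Fin 2) (Fin 2) (LaurentSeries ℂ) :=
  !![1, HahnSeries.single (-(n : ℤ)) (ζ n);
     HahnSeries.single (n : ℤ) (-(starRingEnd ℂ) (ζ n)), 1]

/-- The truncated product `P_N(z) = ∏_{n=N}^{1} [[1, ζ_n z^{-n}], [-ζ̄_n z^n, 1]]`,
with higher index on the left. -/
noncomputable def rsP (ζ : ℕ → ℂ) : ℕ → Matrix (Fin 2) (Fin 2) (LaurentSeries ℂ)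
  | 0 => 1
  | n + 1 => rsM ζ (n + 1) * rsP ζ n

/-- The product attached to an increasing list of indices, where the positions `p`
with `p % 2 = 0 ↔ firstIsI` play the role of the `i`'s (factor `-ζ̄`), and the other
positions play the role of the `j`'s (factor `ζ`). -/
noncomputable def rsTermProd (ζ : ℕ → ℂ) (firstIsI : Bool) (L : List ℕ) : ℂ :=
  ∏ p ∈ Finset.range L.length,
    if (p % 2 = 0) ↔ firstIsI = true then -(starRingEnd ℂ) (ζ (L.getD p 0))
    else ζ (L.getD p 0)

/-- The signed sum `∑ i_* − ∑ j_*` attached to an increasing list of indices. -/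
def rsTermSum (firstIsI : Bool) (L : List ℕ) : ℤ :=
  ∑ p ∈ Finset.range L.length,
    if (p % 2 = 0) ↔ firstIsI = true then (L.getD p 0 : ℤ) else -(L.getD p 0 : ℤ)

open Finset

theorem Finset.sort_insert_of_forall_lt {α : Type*} [LinearOrder α] {s : Finset α} {a : α}
    (h : ∀ b ∈ s, b < a) : (insert a s).sort (· ≤ ·) = s.sort (· ≤ ·) ++ [a] := by
  have hlt : (s.sort (· ≤ ·) ++ [a]).Pairwise (· < ·) := by
    rw [List.pairwise_append]
    exact ⟨(s.sortedLT_sort).pairwise, List.pairwise_singleton _ _,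
      fun b hb _ hc => (List.mem_singleton.mp hc) ▸ h b ((s.mem_sort _).mp hb)⟩
  have hset : (s.sort (· ≤ ·) ++ [a]).toFinset = insert a s := by
    ext; simp
  rw [← hset]
  exact (List.toFinset_sort _ hlt.nodup).2 (hlt.imp le_of_lt)

theorem rsTermSum_append (b : Bool) (L : List ℕ) (a : ℕ) :
    rsTermSum b (L ++ [a]) =
      rsTermSum b L + if L.length % 2 = 0 ↔ b = true then (a : ℤ) else -(a : ℤ) := by
  rw [rsTermSum, rsTermSum, List.length_append, List.length_singleton, sum_range_succ,
    List.getD_append_right _ _ _ _ le_rfl, Nat.sub_self]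
  congr 1
  exact sum_congr rfl fun p hp => by rw [List.getD_append _ _ _ _ (mem_range.mp hp)]

theorem rsTermProd_append (ζ : ℕ → ℂ) (b : Bool) (L : List ℕ) (a : ℕ) :
    rsTermProd ζ b (L ++ [a]) =
      rsTermProd ζ b L *
        if L.length % 2 = 0 ↔ b = true then -(starRingEnd ℂ) (ζ a) else ζ a := by
  rw [rsTermProd, rsTermProd, List.length_append, List.length_singleton, prod_range_succ,
    List.getD_append_right _ _ _ _ le_rfl, Nat.sub_self]
  congr 1
  exact prod_congr rfl fun p hp => by rw [List.getD_append _ _ _ _ (mem_range.mp hp)]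

theorem rsTermSum_cons (b : Bool) (x : ℕ) (L : List ℕ) :
    rsTermSum b (x :: L) = (if b then (x : ℤ) else -(x : ℤ)) + rsTermSum (!b) L := by
  rw [rsTermSum, rsTermSum, List.length_cons, sum_range_succ', add_comm]
  congr 1
  · cases b <;> simp
  · refine sum_congr rfl fun p _ => ?_
    simp only [List.getD_cons_succ]
    congr 1
    cases b <;> simp [Nat.succ_mod_two_eq_zero_iff]

theorem le_rsTermSum_true_cons {x : ℕ} :
    ∀ {L : List ℕ}, (x :: L).Pairwise (· < ·) → Even L.length → (x : ℤ) ≤ rsTermSum true (x :: L)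
  | [], _, _ => by simp [rsTermSum]
  | [_], _, hL => by simp at hL
  | y :: z :: L, h, hL => by
    obtain ⟨hxy, -⟩ := List.pairwise_cons.mp h
    obtain ⟨hyz, hzL⟩ := List.pairwise_cons.mp (List.pairwise_cons.mp h).2
    have ih := le_rsTermSum_true_cons hzL (by simpa [Nat.even_add_one] using hL)
    have : x < y := hxy y (by simp)
    have : y < z := hyz z (by simp)
    simp only [rsTermSum_cons, Bool.not_true, Bool.not_false, if_true, Bool.false_eq_true,
      if_false] at ih ⊢
    omega

theorem rsTermSum_true_sort_pos {T : Finset ℕ} (hpos : ∀ x ∈ T, 0 < x) (hodd : Odd T.card) :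
    0 < rsTermSum true (T.sort (· ≤ ·)) := by
  rcases hL : T.sort (· ≤ ·) with _ | ⟨x, L⟩
  · simp [← length_sort (· ≤ ·), hL] at hodd
  have hx : 0 < x := hpos x ((T.mem_sort _).mp (hL ▸ List.mem_cons_self))
  have hLeven : Even L.length := by
    rwa [← length_sort (· ≤ ·), hL, List.length_cons, Nat.odd_add_one,
      Nat.not_odd_iff_even] at hodd
  have := le_rsTermSum_true_cons (hL ▸ (T.sortedLT_sort).pairwise) hLeven
  omega

noncomputable def altMonomial (ζ : ℕ → ℂ) (T : Finset ℕ) : LaurentSeries ℂ :=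
  HahnSeries.single (rsTermSum true (T.sort (· ≤ ·))) (rsTermProd ζ true (T.sort (· ≤ ·)))

theorem altMonomial_insert_of_even (ζ : ℕ → ℂ) {T : Finset ℕ} {a : ℕ} (h : ∀ b ∈ T, b < a)
    (hT : Even T.card) :
    altMonomial ζ (insert a T) =
      HahnSeries.single (a : ℤ) (-(starRingEnd ℂ) (ζ a)) * altMonomial ζ T := by
  rw [altMonomial, altMonomial, sort_insert_of_forall_lt h, rsTermSum_append,
    rsTermProd_append, HahnSeries.single_mul_single, length_sort,
    if_pos (by simpa [Nat.even_iff] using hT), if_pos (by simpa [Nat.even_iff] using hT),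
    add_comm, mul_comm]

theorem altMonomial_insert_of_odd (ζ : ℕ → ℂ) {T : Finset ℕ} {a : ℕ} (h : ∀ b ∈ T, b < a)
    (hT : Odd T.card) :
    altMonomial ζ (insert a T) = HahnSeries.single (-(a : ℤ)) (ζ a) * altMonomial ζ T := by
  rw [altMonomial, altMonomial, sort_insert_of_forall_lt h, rsTermSum_append,
    rsTermProd_append, HahnSeries.single_mul_single, length_sort,
    if_neg (by simpa [Nat.odd_iff] using hT), if_neg (by simpa [Nat.odd_iff] using hT),
    add_comm, mul_comm]

theorem coeff_sum_altMonomial (ζ : ℕ → ℂ) (s : Finset (Finset ℕ)) (m : ℤ) :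
    (∑ T ∈ s, altMonomial ζ T).coeff m =
      ∑ T ∈ s.filter (fun T => rsTermSum true (T.sort (· ≤ ·)) = m),
        rsTermProd ζ true (T.sort (· ≤ ·)) := by
  rw [sum_filter, HahnSeries.coeff_sum]
  exact sum_congr rfl fun T _ => by
    simp [altMonomial, HahnSeries.coeff_single, eq_comm]

theorem sum_powerset_Icc_succ_filter_card {M : Type*} [AddCommMonoid M] (N : ℕ) (p : ℕ → Prop)
    [DecidablePred p] (f : Finset ℕ → M) :
    ∑ T ∈ (Icc 1 (N + 1)).powerset.filter (fun T => p T.card), f T =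
      ∑ T ∈ (Icc 1 N).powerset.filter (fun T => p T.card), f T +
        ∑ T ∈ (Icc 1 N).powerset.filter (fun T => p (T.card + 1)), f (insert (N + 1) T) := by
  have hN : N + 1 ∉ Icc 1 N := by simp
  rw [← insert_Icc_right_eq_Icc_add_one (by omega), sum_filter, sum_powerset_insert hN,
    sum_filter, sum_filter]
  congr 1
  refine sum_congr rfl fun T hT => ?_
  rw [card_insert_of_notMem fun h => hN (mem_powerset.mp hT h)]

theorem rsP_col_zero (ζ : ℕ → ℂ) (N : ℕ) :
    rsP ζ N 0 0 = ∑ T ∈ (Icc 1 N).powerset.filter (fun T => Even T.card), altMonomial ζ T ∧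
    rsP ζ N 1 0 = ∑ T ∈ (Icc 1 N).powerset.filter (fun T => Odd T.card), altMonomial ζ T := by
  induction N with
  | zero => simp [rsP, altMonomial, rsTermSum, rsTermProd, filter_singleton]
  | succ N ih =>
    have hlt : ∀ T ∈ (Icc 1 N).powerset, ∀ b ∈ T, b < N + 1 := fun T hT b hb => by
      have := mem_Icc.mp (mem_powerset.mp hT hb); omega
    have h00 : rsP ζ (N + 1) 0 0 =
        rsP ζ N 0 0 + HahnSeries.single (-((N + 1 : ℕ) : ℤ)) (ζ (N + 1)) * rsP ζ N 1 0 := by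
      simp [rsP, rsM, Matrix.mul_apply, Fin.sum_univ_two]
    have h10 : rsP ζ (N + 1) 1 0 =
        rsP ζ N 1 0 +
          HahnSeries.single ((N + 1 : ℕ) : ℤ) (-(starRingEnd ℂ) (ζ (N + 1))) * rsP ζ N 0 0 := by
      simp [rsP, rsM, Matrix.mul_apply, Fin.sum_univ_two, add_comm]
    constructor
    · rw [h00, sum_powerset_Icc_succ_filter_card, ih.1, ih.2, mul_sum]
      simp only [Nat.even_add_one, Nat.not_even_iff_odd]
      congr 1
      refine sum_congr rfl fun T hT => ?_
      rw [mem_filter] at hT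
      exact (altMonomial_insert_of_odd ζ (hlt T hT.1) hT.2).symm
    · rw [h10, sum_powerset_Icc_succ_filter_card, ih.1, ih.2, mul_sum]
      simp only [Nat.odd_add_one, Nat.not_odd_iff_even]
      congr 1
      refine sum_congr rfl fun T hT => ?_
      rw [mem_filter] at hT
      exact (altMonomial_insert_of_even ζ (hlt T hT.1) hT.2).symm

theorem coeff_rsP_one_zero (ζ : ℕ → ℂ) (N : ℕ) (m : ℤ) :
    (rsP ζ N 1 0).coeff m =
      ∑ T ∈ (Icc 1 N).powerset.filter
          (fun T => T.card % 2 = 1 ∧ rsTermSum true (T.sort (· ≤ ·)) = m),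
        rsTermProd ζ true (T.sort (· ≤ ·)) := by
  rw [(rsP_col_zero ζ N).2, coeff_sum_altMonomial, filter_filter]
  simp only [Nat.odd_iff]

/-- The `(2,1)` entry of the truncated product `P_N` is a Laurent polynomial whose
coefficient of `z^m`, for `m ≥ 1`, is the sum over all multi-indices
`0 < i₁ < j₁ < i₂ < ⋯ < j_r < i_{r+1} ≤ N` (i.e. subsets of `{1,…,N}` of odd
cardinality, listed increasingly, with the `i`'s in the even positions) satisfying
`∑ i_* − ∑ j_* = m`, of `(−ζ̄_{i₁})ζ_{j₁} ⋯ (−ζ̄_{i_r})ζ_{j_r}(−ζ̄_{i_{r+1}})`;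
and the coefficient of `z^m` vanishes for `m ≤ 0`. -/
theorem coeff_entry21_of_truncated_product (N : ℕ) (ζ : ℕ → ℂ) :
    (∀ m : ℕ, 1 ≤ m →
      ((rsP ζ N) 1 0).coeff (m : ℤ) =
        ∑ T ∈ (Finset.Icc 1 N).powerset.filter
            (fun T => T.card % 2 = 1 ∧ rsTermSum true (T.sort (· ≤ ·)) = (m : ℤ)),
          rsTermProd ζ true (T.sort (· ≤ ·))) ∧
    ∀ m : ℤ, m ≤ 0 → ((rsP ζ N) 1 0).coeff m = 0 := by
  refine ⟨fun m _ => coeff_rsP_one_zero ζ N m, fun m hm => ?_⟩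
  rw [coeff_rsP_one_zero]
  refine sum_eq_zero fun T hT => absurd hm ?_
  obtain ⟨hsub, hodd, hsum⟩ : T ⊆ Icc 1 N ∧ T.card % 2 = 1 ∧ _ := by
    simpa only [mem_filter, mem_powerset] using hT
  have hpos := rsTermSum_true_sort_pos (fun x hx => (mem_Icc.mp (hsub hx)).1) (Nat.odd_iff.mpr hodd)
  omega
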